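/- The image î(ℝ^d) equals the set of all sequences (z_n)_{n∈ℕ} ∈ S_A such that z_n converges to 0 in 𝕋^d (with the quotient topology); that is, (z_n) ∈ S_A satisfies z_n → 0 if and only if (z_n) = î(x) for some x ∈ ℝ^d. -/

import Mathlib

open Matrix MeasureTheory Filter Topology

noncomputable section

/-- The integer lattice ℤ^d inside ℝ^d. -/
def intLattice (d : ℕ) : AddSubgroup (Fin d → ℝ) where
  carrier := {x | ∀ i, ∃ k : ℤ, x i = (k : ℝ)}
  zero_mem' := fun i => ⟨0, by simp⟩
  add_mem' := by
    intro x y hx hy i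
    obtain ⟨a, ha⟩ := hx i
    obtain ⟨b, hb⟩ := hy i
    exact ⟨a + b, by simp [ha, hb]⟩
  neg_mem' := by
    intro x hx i
    obtain ⟨a, ha⟩ := hx i
    exact ⟨-a, by simp [ha]⟩

/-- The torus ℝ^d / ℤ^d. -/
abbrev Torus (d : ℕ) := (Fin d → ℝ) ⧸ intLattice d

/-- The quotient homomorphism π : ℝ^d → 𝕋^d. -/
def torusMk (d : ℕ) : (Fin d → ℝ) →+ Torus d := QuotientAddGroup.mk' (intLattice d)

/-- A square integer matrix is expansive if all of its complex eigenvalues `μ`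
satisfy `|μ| > 1`. -/
def Expansive {d : ℕ} (A : Matrix (Fin d) (Fin d) ℤ) : Prop :=
  ∀ μ : ℂ, (Matrix.charpoly (A.map (Int.cast : ℤ → ℂ))).IsRoot μ → 1 < ‖μ‖

/-- The real matrix associated to an integer matrix. -/
def toR {d : ℕ} (A : Matrix (Fin d) (Fin d) ℤ) : Matrix (Fin d) (Fin d) ℝ :=
  A.map (Int.cast : ℤ → ℝ)

lemma latticeMap_aux {d : ℕ} (M : Matrix (Fin d) (Fin d) ℤ) :
    intLattice d ≤ (intLattice d).comap (toR M).mulVecLin.toAddMonoidHom := by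
  intro x hx
  choose k hk using hx
  intro i
  refine ⟨∑ j, M i j * k j, ?_⟩
  have : (toR M).mulVecLin.toAddMonoidHom x i = ∑ j, (M i j : ℝ) * (k j : ℝ) := by
    simp [toR, Matrix.mulVec, dotProduct, hk, Matrix.map_apply]
  rw [this]
  push_cast
  ring

/-- The endomorphism of the torus induced by an integer matrix. -/
def torusHom {d : ℕ} (M : Matrix (Fin d) (Fin d) ℤ) : Torus d →+ Torus d :=
  QuotientAddGroup.map _ _ (toR M).mulVecLin.toAddMonoidHom (latticeMap_aux M)

/-- The solenoid `S_A`, as an additive subgroup of `(𝕋^d)^ℕ`. -/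
def solenoid {d : ℕ} (A : Matrix (Fin d) (Fin d) ℤ) : AddSubgroup (ℕ → Torus d) where
  carrier := {z | ∀ n, torusHom Aᵀ (z (n + 1)) = z n}
  zero_mem' := by intro n; simp
  add_mem' := by
    intro a b ha hb n
    simp only [Pi.add_apply, map_add, ha n, hb n]
  neg_mem' := by
    intro a ha n
    simp only [Pi.neg_apply, map_neg, ha n]

/-- The shift automorphism σ_A of the solenoid (written on the ambient space). -/
def sigmaA {d : ℕ} (A : Matrix (Fin d) (Fin d) ℤ) (z : ℕ → Torus d) : ℕ → Torus d
  | 0 => torusHom Aᵀ (z 0)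
  | n + 1 => z n

/-- The embedding î : ℝ^d → S_A, î(x) = (π((Aᵀ)^{-n} x))ₙ. -/
def ihat {d : ℕ} (A : Matrix (Fin d) (Fin d) ℤ) (x : Fin d → ℝ) : ℕ → Torus d :=
  fun n => torusMk d ((((toR A)ᵀ)⁻¹ ^ n).mulVec x)

end

/-!
If `z ∈ S_A` tends to `0`, lift `z n` to the representative `r n ∈ [-1/2, 1/2]^d`; then `r n → 0`
and `Aᵀ r (n+1) - r n` is an integer vector tending to `0`, hence eventually `Aᵀ r (n+1) = r n`.
So `(Aᵀ)^n r n` is eventually a constant `x`, and `î(x)` agrees with `z` from some index on, hence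
everywhere, since an entry of a point of `S_A` is determined by any later one.
Conversely `(Aᵀ)⁻¹ ^ n → 0` by Gelfand's formula, the eigenvalues of `(Aᵀ)⁻¹` lying in the open
unit disc, so `î(x) → 0`.
-/

section SpectralRadius

variable {𝔸 : Type*} [NormedRing 𝔸] [NormedAlgebra ℂ 𝔸] [CompleteSpace 𝔸]

theorem tendsto_pow_nhds_zero_of_spectralRadius_lt_one {a : 𝔸} (h : spectralRadius ℂ a < 1) :
    Tendsto (a ^ ·) atTop (𝓝 0) := by
  obtain ⟨r, hr, hr1⟩ := ENNReal.lt_iff_exists_nnreal_btwn.mp h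
  have hle : ∀ᶠ n : ℕ in atTop, ‖a ^ n‖ ≤ r ^ n := by
    have hgelfand := spectrum.pow_nnnorm_pow_one_div_tendsto_nhds_spectralRadius a
    filter_upwards [hgelfand.eventually_lt_const hr, eventually_gt_atTop 0] with n hn hn0
    rw [one_div, ENNReal.rpow_inv_lt_iff (by positivity), ENNReal.rpow_natCast] at hn
    exact_mod_cast hn.le
  exact squeeze_zero_norm' hle (tendsto_pow_atTop_nhds_zero_of_lt_one r.2 (mod_cast hr1))

theorem tendsto_pow_nhds_zero_of_forall_mem_spectrum {a : 𝔸}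
    (h : ∀ z ∈ spectrum ℂ a, ‖z‖ < 1) : Tendsto (a ^ ·) atTop (𝓝 0) := by
  cases subsingleton_or_nontrivial 𝔸
  · simpa only [Subsingleton.elim _ (0 : 𝔸)] using tendsto_const_nhds
  · exact tendsto_pow_nhds_zero_of_spectralRadius_lt_one <|
      spectrum.spectralRadius_lt_of_forall_lt a fun z hz => mod_cast h z hz

theorem Units.tendsto_inv_pow_nhds_zero {u : 𝔸ˣ} (h : ∀ z ∈ spectrum ℂ (u : 𝔸), 1 < ‖z‖) :
    Tendsto ((↑u⁻¹ : 𝔸) ^ ·) atTop (𝓝 0) :=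
  tendsto_pow_nhds_zero_of_forall_mem_spectrum fun z hz =>
    (one_lt_inv_iff₀.mp (norm_inv z ▸ h _ (spectrum.inv₀_mem_iff.mpr hz))).2

end SpectralRadius

theorem Matrix.isUnit_of_not_isRoot_charpoly_zero {n K : Type*} [Fintype n] [DecidableEq n]
    [Field K] {M : Matrix n n K} (h : ¬M.charpoly.IsRoot 0) : IsUnit M :=
  spectrum.isUnit_of_zero_notMem (R := K) fun h0 => h (mem_spectrum_iff_isRoot_charpoly.mp h0)

theorem Matrix.tendsto_inv_pow_nhds_zero {n : Type*} [Fintype n] [DecidableEq n]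
    {M : Matrix n n ℂ} (h : ∀ μ, M.charpoly.IsRoot μ → 1 < ‖μ‖) :
    Tendsto (M⁻¹ ^ ·) atTop (𝓝 0) := by
  -- a submultiplicative norm inducing the product topology
  let := @Matrix.linftyOpNormedRing
  let := @Matrix.linftyOpNormedAlgebra
  have : CompleteSpace (Matrix n n ℂ) := FiniteDimensional.complete ℂ _
  have hM : IsUnit M := isUnit_of_not_isRoot_charpoly_zero fun h0 => (h 0 h0).not_ge (by simp)
  rw [← hM.unit_spec, ← coe_units_inv]
  exact Units.tendsto_inv_pow_nhds_zero fun z hz => h z (mem_spectrum_iff_isRoot_charpoly.mp hz)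

theorem Matrix.exists_eventually_inv_pow_mulVec_eq {n K : Type*} [Fintype n] [DecidableEq n]
    [Field K] {B : Matrix n n K} (hB : IsUnit B.det) {r : ℕ → n → K}
    (hr : ∀ᶠ k in atTop, B *ᵥ r (k + 1) = r k) :
    ∃ x, ∀ᶠ k in atTop, B⁻¹ ^ k *ᵥ x = r k := by
  obtain ⟨N, hN⟩ := eventually_atTop.mp hr
  -- `B ^ k *ᵥ r k` is constant from `N` on, and its value is the witness.
  have hconst : ∀ k, N ≤ k → B ^ k *ᵥ r k = B ^ N *ᵥ r N := by
    intro k hk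
    induction k, hk using Nat.le_induction with
    | base => rfl
    | succ k hk ih => rw [pow_succ, ← mulVec_mulVec, hN k hk, ih]
  refine ⟨B ^ N *ᵥ r N, eventually_atTop.mpr ⟨N, fun k hk => ?_⟩⟩
  rw [← hconst k hk, mulVec_mulVec, inv_pow', nonsing_inv_mul _ (det_pow B k ▸ hB.pow k),
    one_mulVec]

theorem toR_transpose {d : ℕ} (M : Matrix (Fin d) (Fin d) ℤ) : toR Mᵀ = (toR M)ᵀ :=
  rfl

namespace Expansive

variable {d : ℕ} {A : Matrix (Fin d) (Fin d) ℤ}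

theorem one_lt_norm_of_isRoot (hA : Expansive A) {μ : ℂ}
    (hμ : (((toR A)ᵀ).map Complex.ofRealHom).charpoly.IsRoot μ) : 1 < ‖μ‖ := by
  have : ((toR A)ᵀ).map Complex.ofRealHom = (A.map (Int.cast : ℤ → ℂ))ᵀ := by ext; simp [toR]
  rw [this, charpoly_transpose] at hμ
  exact hA μ hμ

theorem isUnit_det (hA : Expansive A) : IsUnit ((toR A)ᵀ).det := by
  have hM := Matrix.isUnit_of_not_isRoot_charpoly_zero fun h0 =>
    (hA.one_lt_norm_of_isRoot h0).not_ge (by simp)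
  rw [isUnit_iff_isUnit_det, ← RingHom.mapMatrix_apply, ← RingHom.map_det] at hM
  exact (isUnit_map_iff _ _).mp hM

theorem tendsto_inv_pow (hA : Expansive A) :
    Tendsto (((toR A)ᵀ)⁻¹ ^ ·) atTop (𝓝 0) := by
  set B := (toR A)ᵀ
  have hinv : (B.map Complex.ofRealHom)⁻¹ = B⁻¹.map Complex.ofRealHom := by
    refine inv_eq_left_inv ?_
    rw [← RingHom.mapMatrix_apply, ← RingHom.mapMatrix_apply, ← map_mul,
      nonsing_inv_mul _ hA.isUnit_det, map_one]
  have hmap : ∀ n : ℕ, B⁻¹ ^ n = ((B.map Complex.ofRealHom)⁻¹ ^ n).map Complex.re := by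
    intro n
    rw [hinv, ← RingHom.mapMatrix_apply, ← map_pow, RingHom.mapMatrix_apply, Matrix.map_map]
    ext; simp
  rw [funext hmap, ← Matrix.map_zero _ Complex.zero_re]
  exact ((continuous_id.matrix_map Complex.continuous_re).tendsto 0).comp
    (Matrix.tendsto_inv_pow_nhds_zero fun _ => hA.one_lt_norm_of_isRoot)

end Expansive

section Torus

variable {d : ℕ}

theorem continuous_torusMk : Continuous (torusMk d) := continuous_quotient_mk'

theorem isOpenMap_torusMk : IsOpenMap (torusMk d) := QuotientAddGroup.isOpenMap_coe

theorem torusMk_eq_torusMk_iff {v w : Fin d → ℝ} :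
    torusMk d v = torusMk d w ↔ -v + w ∈ intLattice d :=
  QuotientAddGroup.eq

theorem torusHom_torusMk (M : Matrix (Fin d) (Fin d) ℤ) (v : Fin d → ℝ) :
    torusHom M (torusMk d v) = torusMk d (toR M *ᵥ v) :=
  rfl

theorem eq_zero_of_mem_intLattice_of_norm_lt_one {v : Fin d → ℝ} (hv : v ∈ intLattice d)
    (h : ‖v‖ < 1) : v = 0 := by
  funext i
  obtain ⟨k, hk⟩ := hv i
  have hk1 : |(k : ℝ)| < 1 := hk ▸ (norm_le_pi_norm v i).trans_lt h
  have hk0 : k = 0 := Int.abs_lt_one_iff.mp (mod_cast hk1)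
  rw [hk, hk0, Int.cast_zero, Pi.zero_apply]

theorem Filter.Tendsto.eventually_eq_zero_of_mem_intLattice {ι : Type*} {l : Filter ι}
    {f : ι → Fin d → ℝ} (hlim : Tendsto f l (𝓝 0)) (hf : ∀ i, f i ∈ intLattice d) :
    ∀ᶠ i in l, f i = 0 := by
  filter_upwards [hlim.norm.eventually_lt_const (by norm_num : ‖(0 : Fin d → ℝ)‖ < 1)] with i hi
  exact eq_zero_of_mem_intLattice_of_norm_lt_one (hf i) hi

noncomputable def torusRep (w : Torus d) : Fin d → ℝ :=
  fun i => w.out i - round (w.out i)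

theorem torusMk_torusRep (w : Torus d) : torusMk d (torusRep w) = w := by
  refine (torusMk_eq_torusMk_iff.mpr fun i => ⟨round (w.out i), ?_⟩).trans
    (QuotientAddGroup.out_eq' w)
  simp [torusRep]

theorem norm_torusRep_le (w : Torus d) : ‖torusRep w‖ ≤ 1 / 2 :=
  pi_norm_le_iff_of_nonneg (by norm_num) |>.mpr fun i => by
    simpa [torusRep, Real.norm_eq_abs] using abs_sub_round (w.out i)

theorem tendsto_torusRep : Tendsto torusRep (𝓝 (0 : Torus d)) (𝓝 0) := by
  refine Metric.tendsto_nhds.mpr fun ε hε => ?_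
  set δ := min ε (1 / 2)
  have hδ : 0 < δ := lt_min hε (by norm_num)
  have hU : torusMk d '' Metric.ball 0 δ ∈ 𝓝 0 :=
    isOpenMap_torusMk.image_mem_nhds (by simpa using Metric.ball_mem_nhds 0 hδ)
  filter_upwards [hU] with w ⟨v, hv, hvw⟩
  rw [mem_ball_zero_iff] at hv
  have hlat : -torusRep w + v ∈ intLattice d :=
    torusMk_eq_torusMk_iff.mp ((torusMk_torusRep w).trans hvw.symm)
  have hsmall : ‖-torusRep w + v‖ < 1 :=
    calc ‖-torusRep w + v‖ ≤ ‖torusRep w‖ + ‖v‖ := norm_add_le_of_le (norm_neg _).le le_rfl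
      _ < 1 / 2 + δ := by linarith [norm_torusRep_le w]
      _ ≤ 1 := by linarith [min_le_right ε (1 / 2)]
  have hrep : torusRep w = v := by
    simpa [neg_add_eq_zero] using eq_zero_of_mem_intLattice_of_norm_lt_one hlat hsmall
  rw [dist_zero_right, hrep]
  exact hv.trans_le (min_le_left _ _)

end Torus

section Solenoid

variable {d : ℕ} {A : Matrix (Fin d) (Fin d) ℤ} {z w : ℕ → Torus d}

theorem iterate_torusHom_of_mem_solenoid (hz : z ∈ solenoid A) (n k : ℕ) :
    (torusHom Aᵀ)^[k] (z (n + k)) = z n := by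
  induction k with
  | zero => rfl
  | succ k ih => rw [Function.iterate_succ_apply, ← add_assoc, hz, ih]

theorem eq_of_mem_solenoid_of_eventuallyEq (hz : z ∈ solenoid A) (hw : w ∈ solenoid A)
    (h : z =ᶠ[atTop] w) : z = w := by
  obtain ⟨N, hN⟩ := eventually_atTop.mp h
  funext n
  rw [← iterate_torusHom_of_mem_solenoid hz n N, ← iterate_torusHom_of_mem_solenoid hw n N,
    hN _ (Nat.le_add_left N n)]

theorem ihat_mem_solenoid (hA : IsUnit ((toR A)ᵀ).det) (x : Fin d → ℝ) :
    ihat A x ∈ solenoid A := by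
  intro n
  rw [ihat, ihat, torusHom_torusMk, mulVec_mulVec, pow_succ', ← mul_assoc, toR_transpose,
    mul_nonsing_inv _ hA, one_mul]

theorem eventually_mulVec_eq_of_tendsto (hz : z ∈ solenoid A) {r : ℕ → Fin d → ℝ}
    (hrz : ∀ n, torusMk d (r n) = z n) (hr : Tendsto r atTop (𝓝 0)) :
    ∀ᶠ n in atTop, toR Aᵀ *ᵥ r (n + 1) = r n := by
  have hlat : ∀ n, -(toR Aᵀ *ᵥ r (n + 1)) + r n ∈ intLattice d := fun n =>
    torusMk_eq_torusMk_iff.mp <| by rw [← torusHom_torusMk, hrz, hrz]; exact hz n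
  have hBr : Tendsto (fun n => toR Aᵀ *ᵥ r (n + 1)) atTop (𝓝 0) := by
    have h := ((continuous_const (y := toR Aᵀ)).matrix_mulVec continuous_id).tendsto 0
    simpa only [id, mulVec_zero, Function.comp_def] using h.comp (hr.comp (tendsto_add_atTop_nat 1))
  have hlim : Tendsto (fun n => -(toR Aᵀ *ᵥ r (n + 1)) + r n) atTop (𝓝 0) := by
    simpa only [neg_zero, add_zero] using hBr.neg.add hr
  filter_upwards [hlim.eventually_eq_zero_of_mem_intLattice hlat] with n hn
  exact neg_add_eq_zero.mp hn

end Solenoid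

namespace Expansive

variable {d : ℕ} {A : Matrix (Fin d) (Fin d) ℤ}

theorem tendsto_ihat (hA : Expansive A) (x : Fin d → ℝ) :
    Tendsto (ihat A x) atTop (𝓝 0) := by
  have h := ((continuous_id.matrix_mulVec (continuous_const (y := x))).tendsto 0).comp
    hA.tendsto_inv_pow
  rw [id, zero_mulVec] at h
  have h' := (continuous_torusMk.tendsto 0).comp h
  rwa [map_zero] at h'

theorem exists_ihat_eq_of_tendsto (hA : Expansive A) {z : ℕ → Torus d} (hz : z ∈ solenoid A)
    (hlim : Tendsto z atTop (𝓝 0)) : ∃ x, ihat A x = z := by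
  obtain ⟨x, hx⟩ := exists_eventually_inv_pow_mulVec_eq hA.isUnit_det <|
    eventually_mulVec_eq_of_tendsto hz (fun n => torusMk_torusRep (z n))
      (tendsto_torusRep.comp hlim)
  refine ⟨x, eq_of_mem_solenoid_of_eventuallyEq (ihat_mem_solenoid hA.isUnit_det x) hz ?_⟩
  filter_upwards [hx] with n hn
  rw [ihat, hn, torusMk_torusRep]

end Expansive

theorem statement1_general (d : ℕ) (A : Matrix (Fin d) (Fin d) ℤ)
    (hA : Expansive A) (z : ℕ → Torus d) (hz : z ∈ solenoid A) :
    Filter.Tendsto z Filter.atTop (nhds (0 : Torus d)) ↔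
      ∃ x : Fin d → ℝ, ihat A x = z := by
  refine ⟨hA.exists_ihat_eq_of_tendsto hz, ?_⟩
  rintro ⟨x, rfl⟩
  exact hA.tendsto_ihat x

/-- the image of î is exactly the set of elements of the solenoid
whose entries converge to 0 in the torus. -/
theorem statement1 (d : ℕ) (hd : 0 < d) (A : Matrix (Fin d) (Fin d) ℤ)
    (hA : Expansive A) (z : ℕ → Torus d) (hz : z ∈ solenoid A) :
    Filter.Tendsto z Filter.atTop (nhds (0 : Torus d)) ↔
      ∃ x : Fin d → ℝ, ihat A x = z :=
  statement1_general d A hA z hz
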